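/- Let 𝔤 = 𝔤_{-k} ⊕ ⋯ ⊕ 𝔤_0 be a fundamental graded Lie algebra (the action of 𝔤_0 on 𝔤_{-1} is faithful) and 𝔥 = t*(𝔤) with the product metric ⟨·,·⟩ from an adapted metric on 𝔤. If ⟨·,·⟩ is admissible (equivalently, identity (θ([X+ξ, θ([Y, Z+α])]) = [θ([X, θ(Y)]), Z+α] + [Y, θ([X+ξ, θ(Z+α)])] holds for all X+ξ ∈ 𝔤_0 ⊕ 𝔤*, Y ∈ 𝔤_-, Z+α ∈ 𝔥), then 𝔤_0 is abelian. In particular: taking X = 0, Y, Z ∈ 𝔤_{-1}, α, ξ ∈ 𝔤_0* in the identity forces [Y, θ(L_{X_0}(ξ))] = 0 with X_0 = θ(α), and faithfulness of the 𝔤_0-action on 𝔤_{-1} gives L_{X_0}(ξ) = 0 for all X_0 ∈ 𝔤_0, ξ ∈ 𝔤_0*, i.e. the coadjoint action of 𝔤_0 on 𝔤_0* vanishes, so 𝔤_0 is abelian. -/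

import Mathlib

/-!
Put `X = 0`, `ξ = ♯C`, `Z + α = ♯A` with `A, C ∈ 𝔤₀` and `Y ∈ 𝔤₋₁` in the θ-identity. Since
`𝔤₁ = 0`, the coadjoint action of `Y` kills `♯A`, and every term except `[Y, ♭(L_A ♯C)]` vanishes.
The grading puts `♭(L_A ♯C)` in `𝔤₀`, so faithfulness gives `L_A ♯C = 0`, that is
`⟪C, [A, ·]⟫ = 0` for every `C ∈ 𝔤₀`; taking `C = [A, B]` and evaluating at `B` gives `[A, B] = 0`.
-/

open scoped RealInnerProductSpace

variable {G : Type*} [NormedAddCommGroup G] [InnerProductSpace ℝ G]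
  [FiniteDimensional ℝ G] [LieRing G]

attribute [local instance high] NormedAddCommGroup.toAddCommGroup

/-- The coadjoint action `L_X(α) = -α ∘ ad_X`. -/
noncomputable def coadAct (ad' : G → G →ₗ[ℝ] G) (x : G) (η : Module.Dual ℝ G) :
    Module.Dual ℝ G :=
  -(η ∘ₗ ad' x)

/-- The cotangent Lie bracket on `𝔥 = t^*(𝔤) = 𝔤 × 𝔤^*`:
`[X+ξ, Y+η] = ([X,Y], L_X(η) − L_Y(ξ))`. -/
noncomputable def ctBkt (ad' : G → G →ₗ[ℝ] G) (p q : G × Module.Dual ℝ G) :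
    G × Module.Dual ℝ G :=
  (⁅p.1, q.1⁆, coadAct ad' p.1 q.2 - coadAct ad' q.1 p.2)

/-- The musical isomorphism `♭ : 𝔤^* → 𝔤` of the metric. -/
noncomputable def flatG (α : Module.Dual ℝ G) : G :=
  (InnerProductSpace.toDual ℝ G).symm (LinearMap.toContinuousLinearMap α)

/-- The musical isomorphism `♯ : 𝔤 → 𝔤^*`, `X ↦ ⟪X, ·⟫`. -/
noncomputable def sharpG (x : G) : Module.Dual ℝ G :=
  ((innerSL ℝ x : G →L[ℝ] ℝ) : G →ₗ[ℝ] ℝ)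

/-- The involution `θ` of `𝔥 = 𝔤 × 𝔤^*` exchanging `𝔤` and `𝔤^*` via `♯`, `♭`. -/
noncomputable def thetaG (p : G × Module.Dual ℝ G) : G × Module.Dual ℝ G :=
  (flatG p.2, sharpG p.1)

section Cotangent

variable {E : Type*} [NormedAddCommGroup E] [InnerProductSpace ℝ E]

lemma sharpG_apply (x w : E) : sharpG x w = ⟪x, w⟫ := rfl

lemma sharpG_zero : sharpG (0 : E) = 0 := by
  ext w; simp [sharpG_apply]

lemma coadAct_sharpG_apply (ad' : E → E →ₗ[ℝ] E) (x C w : E) :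
    coadAct ad' x (sharpG C) w = -⟪C, ad' x w⟫ := rfl

lemma coadAct_zero_right (ad' : E → E →ₗ[ℝ] E) (x : E) :
    coadAct ad' x (0 : Module.Dual ℝ E) = 0 := by
  simp [coadAct]

lemma coadAct_zero_left {ad' : E → E →ₗ[ℝ] E} (hzero : ad' 0 = 0) (η : Module.Dual ℝ E) :
    coadAct ad' 0 η = 0 := by
  simp [coadAct, hzero]

variable [FiniteDimensional ℝ E]

lemma inner_flatG (η : Module.Dual ℝ E) (w : E) : ⟪flatG η, w⟫ = η w := by
  simp [flatG]

lemma flatG_sharpG (x : E) : flatG (sharpG x) = x :=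
  ext_inner_right ℝ fun w => by rw [inner_flatG, sharpG_apply]

lemma flatG_neg (η : Module.Dual ℝ E) : flatG (-η) = -flatG η :=
  ext_inner_right ℝ fun w => by simp [inner_flatG]

lemma flatG_eq_zero_iff {η : Module.Dual ℝ E} : flatG η = 0 ↔ η = 0 := by
  refine ⟨fun h => LinearMap.ext fun w => ?_, fun h => ext_inner_right ℝ fun w => ?_⟩
  · simpa [h] using (inner_flatG η w).symm
  · simp [inner_flatG, h]

lemma flatG_zero : flatG (0 : Module.Dual ℝ E) = 0 := flatG_eq_zero_iff.mpr rfl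

end Cotangent

lemma LinearMap.eq_zero_of_iSup_eq_top {R M N ι : Type*} [Semiring R] [AddCommMonoid M]
    [Module R M] [AddCommMonoid N] [Module R N] {V : ι → Submodule R M} (hV : ⨆ i, V i = ⊤)
    (f : M →ₗ[R] N) (hf : ∀ i, ∀ x ∈ V i, f x = 0) : f = 0 :=
  LinearMap.ker_eq_top.mp <| top_le_iff.mp <| hV ▸ iSup_le fun i x hx => hf i x hx

lemma mem_of_forall_inner_eq_zero {E ι : Type*} [NormedAddCommGroup E] [InnerProductSpace ℝ E]
    [FiniteDimensional ℝ E] {V : ι → Submodule ℝ E} (hV : ⨆ i, V i = ⊤)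
    (horth : ∀ i j, i ≠ j → ∀ x ∈ V i, ∀ y ∈ V j, ⟪x, y⟫ = 0) {i : ι} {v : E}
    (hv : ∀ j, j ≠ i → ∀ w ∈ V j, ⟪v, w⟫ = 0) : v ∈ V i := by
  set p := (V i).starProjection v
  have hp : p ∈ V i := (V i).starProjection_apply_mem v
  suffices innerₛₗ ℝ (v - p) = 0 from
    sub_eq_zero.mp (inner_self_eq_zero.mp (LinearMap.congr_fun this (v - p))) ▸ hp
  refine LinearMap.eq_zero_of_iSup_eq_top hV _ fun j w hw => ?_
  by_cases hj : j = i
  · subst hj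
    exact (V j).starProjection_inner_eq_zero v w hw
  · simp [hv j hj w hw, horth i j (Ne.symm hj) p hp w hw]

/-- `z` stands for the zero of a second additive structure on `L` (below: the normed one, which
need not be the Lie ring's); `⁅z, z⁆ = z` forces it to be the Lie ring's zero. -/
lemma lie_swap_eq_of_lie_self_eq {L : Type*} [LieRing L] {z : L} (hz : ⁅z, z⁆ = z) {x y : L}
    (h : ⁅x, y⁆ = z) : ⁅y, x⁆ = z := by
  have hz0 : z = 0 := hz.symm.trans (lie_self z)
  rw [← lie_skew, h, hz0, neg_zero]

section GradedLie

variable {L : Type*} [NormedAddCommGroup L] [InnerProductSpace ℝ L] [LieRing L]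
  {gr : ℤ → Submodule ℝ L} {ad' : L → L →ₗ[ℝ] L}

/-- The normed zero is not known to be the Lie ring's, so `ad' 0 = 0` has to come from the
grading: `0 ∈ gr 0 ⊓ gr 1` puts `⁅0, w⁆` in two independent summands. -/
lemma ad_zero_eq_zero (hint : DirectSum.IsInternal gr)
    (hbkt : ∀ i j : ℤ, ∀ x ∈ gr i, ∀ y ∈ gr j, ⁅x, y⁆ ∈ gr (i + j))
    (had' : ∀ x y : L, ad' x y = ⁅x, y⁆) : ad' 0 = 0 := by
  refine LinearMap.eq_zero_of_iSup_eq_top hint.submodule_iSup_eq_top _ fun j w hw => ?_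
  have hdisj : Disjoint (gr j) (gr (1 + j)) :=
    hint.submodule_iSupIndep.pairwiseDisjoint (by omega : j ≠ 1 + j)
  rw [had']
  exact Submodule.disjoint_def.mp hdisj _ (by simpa using hbkt 0 j 0 (zero_mem _) w hw)
    (hbkt 1 j 0 (zero_mem _) w hw)

variable [FiniteDimensional ℝ L]

lemma flatG_coadAct_sharpG_mem (hgr : ⨆ i, gr i = ⊤)
    (hbkt : ∀ i j : ℤ, ∀ x ∈ gr i, ∀ y ∈ gr j, ⁅x, y⁆ ∈ gr (i + j))
    (had' : ∀ x y : L, ad' x y = ⁅x, y⁆)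
    (horth : ∀ i j : ℤ, i ≠ j → ∀ x ∈ gr i, ∀ y ∈ gr j, ⟪x, y⟫ = 0)
    {i j : ℤ} {A C : L} (hA : A ∈ gr i) (hC : C ∈ gr j) :
    flatG (coadAct ad' A (sharpG C)) ∈ gr (j - i) := by
  refine mem_of_forall_inner_eq_zero hgr horth fun k hk w hw => ?_
  rw [inner_flatG, coadAct_sharpG_apply, had',
    horth j (i + k) (by omega) C hC _ (hbkt i k A hA w hw), neg_zero]

lemma coadAct_sharpG_eq_zero (hgr : ⨆ i, gr i = ⊤)
    (hbkt : ∀ i j : ℤ, ∀ x ∈ gr i, ∀ y ∈ gr j, ⁅x, y⁆ ∈ gr (i + j))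
    (had' : ∀ x y : L, ad' x y = ⁅x, y⁆)
    (horth : ∀ i j : ℤ, i ≠ j → ∀ x ∈ gr i, ∀ y ∈ gr j, ⟪x, y⟫ = 0)
    {i j : ℤ} {A C : L} (hA : A ∈ gr i) (hC : C ∈ gr j) (hbot : gr (j - i) = ⊥) :
    coadAct ad' A (sharpG C) = 0 :=
  flatG_eq_zero_iff.mp <| (Submodule.mem_bot ℝ).mp <|
    hbot ▸ flatG_coadAct_sharpG_mem hgr hbkt had' horth hA hC

end GradedLie

section ThetaIdentity

variable {L : Type*} [NormedAddCommGroup L] [InnerProductSpace ℝ L] [FiniteDimensional ℝ L]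
  [LieRing L]

def ThetaIdentity (ad' : L → L →ₗ[ℝ] L) (X : L) (ξ : Module.Dual ℝ L) (Y : L)
    (r : L × Module.Dual ℝ L) : Prop :=
  thetaG (ctBkt ad' (X, ξ) (thetaG (ctBkt ad' (Y, 0) r))) =
    ctBkt ad' (thetaG (ctBkt ad' (X, 0) (thetaG (Y, 0)))) r +
      ctBkt ad' (Y, 0) (thetaG (ctBkt ad' (X, ξ) (thetaG r)))

lemma lie_flatG_coadAct_eq_zero_of_thetaIdentity {ad' : L → L →ₗ[ℝ] L}
    (had' : ∀ x y : L, ad' x y = ⁅x, y⁆) (hzero : ad' 0 = 0) {Y A C : L}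
    (hY : coadAct ad' Y (sharpG A) = 0) (h : ThetaIdentity ad' 0 (sharpG C) Y (0, sharpG A)) :
    ⁅Y, flatG (coadAct ad' A (sharpG C))⁆ = 0 := by
  simp only [ThetaIdentity, ctBkt, thetaG, ← had', hzero, hY, coadAct_zero_left hzero,
    coadAct_zero_right, flatG_zero, sharpG_zero, flatG_sharpG, flatG_neg, LinearMap.zero_apply,
    map_zero, map_neg, zero_sub, sub_self, Prod.mk_add_mk, add_zero, zero_add,
    Prod.mk.injEq] at h
  rw [← had']
  exact neg_eq_zero.mp h.1.symm

end ThetaIdentity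

theorem admissible_implies_abelian
    (gr : ℤ → Submodule ℝ G)
    (hint : DirectSum.IsInternal gr)
    (hnonpos : ∀ i : ℤ, 0 < i → gr i = ⊥)
    (hbkt : ∀ i j : ℤ, ∀ x ∈ gr i, ∀ y ∈ gr j, ⁅x, y⁆ ∈ gr (i + j))
    -- the (ℝ-bilinear) bracket of `𝔤`, as a linear map in the second argument:
    (ad' : G → G →ₗ[ℝ] G) (had' : ∀ x y : G, ad' x y = ⁅x, y⁆)
    -- the metric on `𝔤` is adapted to the gradation:
    (horth : ∀ i j : ℤ, i ≠ j → ∀ x ∈ gr i, ∀ y ∈ gr j, ⟪x, y⟫ = 0)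
    -- fundamentality: the (adjoint) action of `𝔤_0` on `𝔤_{-1}` is faithful:
    (hfaith : ∀ A ∈ gr 0, (∀ v ∈ gr (-1), ⁅A, v⁆ = 0) → A = 0)
    -- admissibility of the orthogonal-sum metric of `𝔥 = t^*(𝔤)`, in its equivalent
    -- form: the `θ`-identity for all `X+ξ ∈ 𝔮 = 𝔤_0 ⊕ 𝔤^*`, `Y ∈ 𝔤_-`, `Z+α ∈ 𝔥`:
    (hadm : ∀ X ∈ gr 0, ∀ ξ : Module.Dual ℝ G, ∀ Y ∈ (⨆ i < (0 : ℤ), gr i),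
      ∀ r : G × Module.Dual ℝ G,
        thetaG (ctBkt ad' (X, ξ) (thetaG (ctBkt ad' (Y, 0) r))) =
          ctBkt ad' (thetaG (ctBkt ad' (X, 0) (thetaG (Y, 0)))) r +
            ctBkt ad' (Y, 0) (thetaG (ctBkt ad' (X, ξ) (thetaG r)))) :
    -- conclusion: `𝔤_0` is abelian
    ∀ A ∈ gr 0, ∀ B ∈ gr 0, ⁅A, B⁆ = 0 := by
  intro A hA B hB
  have hgr := hint.submodule_iSup_eq_top
  have hzero : ad' 0 = 0 := ad_zero_eq_zero hint hbkt had'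
  have hcoad : ∀ C ∈ gr 0, coadAct ad' A (sharpG C) = 0 := by
    intro C hC
    have hv : flatG (coadAct ad' A (sharpG C)) ∈ gr 0 := by
      simpa using flatG_coadAct_sharpG_mem hgr hbkt had' horth hA hC
    refine flatG_eq_zero_iff.mp <| hfaith _ hv fun Y hY => ?_
    have hYA : coadAct ad' Y (sharpG A) = 0 :=
      coadAct_sharpG_eq_zero hgr hbkt had' horth hY hA (by simpa using hnonpos 1 one_pos)
    have hY' : Y ∈ ⨆ i < (0 : ℤ), gr i :=
      Submodule.mem_iSup_of_mem (-1) (Submodule.mem_iSup_of_mem (by norm_num) hY)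
    refine lie_swap_eq_of_lie_self_eq (by rw [← had', hzero, LinearMap.zero_apply]) ?_
    exact lie_flatG_coadAct_eq_zero_of_thetaIdentity had' hzero hYA
      (hadm 0 (zero_mem _) (sharpG C) Y hY' (0, sharpG A))
  have hAB : ⁅A, B⁆ ∈ gr 0 := by simpa using hbkt 0 0 A hA B hB
  have h := LinearMap.congr_fun (hcoad _ hAB) B
  rw [coadAct_sharpG_apply, had', LinearMap.zero_apply, neg_eq_zero] at h
  exact inner_self_eq_zero.mp h
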